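/- arXiv:math/0604528 — 2 statements merged into one kernel-verified Lean document; each statement's English description precedes it below -/
import Mathlib

section
/- Let A, B be rings, ρ : A → B a ring homomorphism, and P ∈ B an idempotent. Define φ(a) = Pρ(a)P and ω(a,a') = φ(aa') − φ(a)φ(a'). Then for all a⁰, a¹, ..., a^{2n} ∈ A: φ(a⁰) · ω(a¹,a²) · ω(a³,a⁴) ⋯ ω(a^{2n-1},a^{2n}) = (−1)ⁿ P ρ(a⁰) P [P,ρ(a¹)] [P,ρ(a²)] ⋯ [P,ρ(a^{2n})]. -/
/-! With `c x = P x - x P`, each curvature term is `ω(x, y) = -P (c x) (c y)`, and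
`P (c x) (c y)` is absorbed by `P` on the right. Since `P ρ(a⁰) P` ends in `P`, the projections
in front of the curvature terms telescope away, leaving the product of the commutators. -/

theorem List.prod_map_range_two_mul {M : Type*} [Monoid M] (f : ℕ → M) (n : ℕ) :
    ((List.range (2 * n)).map f).prod =
      ((List.range n).map fun i => f (2 * i) * f (2 * i + 1)).prod := by
  induction n with
  | zero => simp
  | succ n ih =>
    rw [show 2 * (n + 1) = 2 * n + 1 + 1 by ring, List.prod_range_succ, List.prod_range_succ,
      ih, List.prod_range_succ, mul_assoc]

theorem mul_prod_map_mul_left_of_mul_eq {M : Type*} [Monoid M] {e x : M} (hx : x * e = x)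
    (l : List M) (hl : ∀ u ∈ l, e * u * e = e * u) :
    x * (l.map (e * ·)).prod = x * l.prod := by
  induction l generalizing x with
  | nil => rfl
  | cons u l ih =>
    have hxu : x * u * e = x * u := by
      rw [mul_assoc, ← hx, mul_assoc, ← mul_assoc e, hl u List.mem_cons_self, ← mul_assoc, hx]
    simp only [List.map_cons, List.prod_cons, ← mul_assoc, hx]
    exact ih hxu fun v hv => hl v (List.mem_cons_of_mem u hv)

namespace IsIdempotentElem

variable {B : Type*} [Ring B] {P : B}

theorem compress_mul_sub_compress_mul_compress (hP : IsIdempotentElem P) (x y : B) :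
    P * (x * y) * P - (P * x * P) * (P * y * P) =
      -(P * ((P * x - x * P) * (P * y - y * P))) := by
  have hPP : ∀ z : B, P * (P * z) = P * z := fun z => by rw [← mul_assoc, hP.eq]
  simp only [mul_sub, sub_mul, mul_assoc, hPP]
  abel

theorem mul_commutator_mul_commutator_mul_self (hP : IsIdempotentElem P) (x y : B) :
    P * ((P * x - x * P) * (P * y - y * P)) * P = P * ((P * x - x * P) * (P * y - y * P)) := by
  have hPP : ∀ z : B, P * (P * z) = P * z := fun z => by rw [← mul_assoc, hP.eq]
  simp only [mul_sub, sub_mul, mul_assoc, hPP, hP.eq]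
  abel

end IsIdempotentElem

/-- the product formula
`φ(a⁰)·ω(a¹,a²)⋯ω(a^{2n-1},a^{2n}) = (−1)ⁿ Pρ(a⁰)P [P,ρ(a¹)]⋯[P,ρ(a^{2n})]`,
where `φ(a) = Pρ(a)P` and `ω(a,a') = φ(aa') − φ(a)φ(a')`. -/
theorem stmt3 {A B : Type*} [NonUnitalRing A] [Ring B] (ρ : A →ₙ+* B) (P : B)
    (hP : P * P = P) (n : ℕ) (a : ℕ → A) :
    (P * ρ (a 0) * P) *
      ((List.range n).map (fun i =>
        (P * ρ (a (2 * i + 1) * a (2 * i + 2)) * P) -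
          (P * ρ (a (2 * i + 1)) * P) * (P * ρ (a (2 * i + 2)) * P))).prod
    = (-1 : B) ^ n * (P * ρ (a 0) * P) *
      ((List.range (2 * n)).map (fun i =>
        P * ρ (a (i + 1)) - ρ (a (i + 1)) * P)).prod := by
  set c : ℕ → B := fun i => P * ρ (a (i + 1)) - ρ (a (i + 1)) * P
  set u : ℕ → B := fun i => c (2 * i) * c (2 * i + 1)
  have hω : ∀ i, P * ρ (a (2 * i + 1) * a (2 * i + 2)) * P -
      (P * ρ (a (2 * i + 1)) * P) * (P * ρ (a (2 * i + 2)) * P) = -(P * u i) := fun i => by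
    rw [map_mul, IsIdempotentElem.compress_mul_sub_compress_mul_compress hP]
  have hX : P * ρ (a 0) * P * P = P * ρ (a 0) * P := by rw [mul_assoc, hP]
  have hu : ∀ v ∈ (List.range n).map u, P * v * P = P * v := by
    simp only [List.mem_map]
    rintro _ ⟨i, -, rfl⟩
    exact IsIdempotentElem.mul_commutator_mul_commutator_mul_self hP _ _
  have hterms : (List.range n).map (fun i => -(P * u i)) =
      (((List.range n).map u).map (P * ·)).map Neg.neg := by
    simp only [List.map_map]
    rfl
  simp_rw [hω, List.prod_map_range_two_mul c]
  rw [hterms, List.prod_map_neg, List.length_map, List.length_map, List.length_range,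
    ← ((Commute.neg_one_left _).pow_left n).left_comm, mul_prod_map_mul_left_of_mul_eq hX _ hu,
    ← mul_assoc]
end

section
/- Let u be a complex number with |Im(u)| ≤ √3 · Re(u − 1) (i.e. u lies in the closed region Ū = {z : |Im z| ≤ √3 Re(z−1)}). Then for all λ ≥ 0: |1 + u² + λ|⁻¹ ≤ 2(1+λ)⁻¹, |u| · |1 + u² + λ|⁻¹ ≤ 2(1+λ)^{-1/2}, and |u|² · |1 + u² + λ|⁻¹ ≤ 2. -/
/-! For `u` in the sector, `|arg u| ≤ π/3`, so `w = u²` has `|arg w| ≤ 2π/3`, i.e. `2 Re w ≥ -|w|`.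
With `s = 1 + λ > 0` this gives `|s + w|² = s² + 2 s Re w + |w|² ≥ s² - s|w| + |w|²`, which
dominates `s²/4`, `|w|²/4` and `s|w|`; since `|w| = |u|²` these are the three estimates. -/

namespace Complex

theorem neg_norm_sq_le_two_mul_re_sq {u : ℂ} (hu : |u.im| ≤ √3 * u.re) :
    -‖u ^ 2‖ ≤ 2 * (u ^ 2).re := by
  have him : u.im ^ 2 ≤ 3 * u.re ^ 2 := by
    have := sq_le_sq' (abs_le.1 hu).1 (abs_le.1 hu).2
    rwa [mul_pow, Real.sq_sqrt (by norm_num : (0:ℝ) ≤ 3)] at this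
  rw [norm_pow, Complex.sq_norm, normSq_apply, sq, mul_re]
  nlinarith

section AddOfReal

variable {w : ℂ} {s : ℝ}

theorem sq_sub_mul_add_sq_le_norm_ofReal_add_sq (hs : 0 ≤ s) (hw : -‖w‖ ≤ 2 * w.re) :
    s ^ 2 - s * ‖w‖ + ‖w‖ ^ 2 ≤ ‖(s : ℂ) + w‖ ^ 2 := by
  have hexpand : ‖(s : ℂ) + w‖ ^ 2 = s ^ 2 + 2 * s * w.re + ‖w‖ ^ 2 := by
    simp only [Complex.sq_norm, normSq_apply, add_re, add_im, ofReal_re, ofReal_im]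
    ring
  rw [hexpand]
  nlinarith

theorem le_two_mul_norm_ofReal_add (hs : 0 ≤ s) (hw : -‖w‖ ≤ 2 * w.re) :
    s ≤ 2 * ‖(s : ℂ) + w‖ := by
  have := sq_sub_mul_add_sq_le_norm_ofReal_add_sq hs hw
  nlinarith [sq_nonneg (s - 2 * ‖w‖), norm_nonneg ((s : ℂ) + w)]

theorem norm_le_two_mul_norm_ofReal_add (hs : 0 ≤ s) (hw : -‖w‖ ≤ 2 * w.re) :
    ‖w‖ ≤ 2 * ‖(s : ℂ) + w‖ := by
  have := sq_sub_mul_add_sq_le_norm_ofReal_add_sq hs hw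
  nlinarith [sq_nonneg (2 * s - ‖w‖), norm_nonneg ((s : ℂ) + w)]

theorem mul_norm_le_norm_ofReal_add_sq (hs : 0 ≤ s) (hw : -‖w‖ ≤ 2 * w.re) :
    s * ‖w‖ ≤ ‖(s : ℂ) + w‖ ^ 2 := by
  have := sq_sub_mul_add_sq_le_norm_ofReal_add_sq hs hw
  nlinarith [sq_nonneg (s - ‖w‖)]

end AddOfReal

end Complex

/-- scalar resolvent estimates on the sector
`Ū = {u : |Im u| ≤ √3 (Re u − 1)}`: for `λ ≥ 0`,
`|1+u²+λ|⁻¹ ≤ 2(1+λ)⁻¹`, `|u|·|1+u²+λ|⁻¹ ≤ 2(1+λ)^{-1/2}` and `|u|²·|1+u²+λ|⁻¹ ≤ 2`. -/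
theorem stmt9 (u : ℂ) (hu : |u.im| ≤ Real.sqrt 3 * (u.re - 1))
    (lam : ℝ) (hlam : 0 ≤ lam) :
    ‖1 + u ^ 2 + (lam : ℂ)‖⁻¹ ≤ 2 * (1 + lam)⁻¹ ∧
    ‖u‖ * ‖1 + u ^ 2 + (lam : ℂ)‖⁻¹ ≤ 2 * (1 + lam) ^ (-(1 / 2) : ℝ) ∧
    ‖u‖ ^ 2 * ‖1 + u ^ 2 + (lam : ℂ)‖⁻¹ ≤ 2 := by
  have hz : 1 + u ^ 2 + (lam : ℂ) = ((1 + lam : ℝ) : ℂ) + u ^ 2 := by push_cast; ring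
  rw [hz]
  set s : ℝ := 1 + lam
  have hs : 0 < s := by positivity
  have hw : -‖u ^ 2‖ ≤ 2 * (u ^ 2).re :=
    Complex.neg_norm_sq_le_two_mul_re_sq (hu.trans (by gcongr; linarith))
  have hsz : s ≤ 2 * ‖(s : ℂ) + u ^ 2‖ := Complex.le_two_mul_norm_ofReal_add hs.le hw
  have hzpos : 0 < ‖(s : ℂ) + u ^ 2‖ := by linarith
  have hsqrt : ‖u‖ * √s ≤ ‖(s : ℂ) + u ^ 2‖ := by
    refine (pow_le_pow_iff_left₀ (by positivity) hzpos.le two_ne_zero).1 ?_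
    rw [mul_pow, Real.sq_sqrt hs.le, ← norm_pow, mul_comm]
    exact Complex.mul_norm_le_norm_ofReal_add_sq hs.le hw
  refine ⟨?_, ?_, ?_⟩
  · calc ‖(s : ℂ) + u ^ 2‖⁻¹ ≤ (s / 2)⁻¹ := inv_anti₀ (by positivity) (by linarith)
      _ = 2 * s⁻¹ := by rw [inv_div, div_eq_mul_inv]
  · rw [Real.rpow_neg hs.le, ← Real.sqrt_eq_rpow]
    calc ‖u‖ * ‖(s : ℂ) + u ^ 2‖⁻¹ ≤ (√s)⁻¹ := by
          rw [← div_eq_mul_inv, div_le_iff₀ hzpos, inv_mul_eq_div, le_div_iff₀ (by positivity)]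
          exact hsqrt
      _ ≤ 2 * (√s)⁻¹ := le_mul_of_one_le_left (by positivity) one_le_two
  · rw [← div_eq_mul_inv, div_le_iff₀ hzpos, ← norm_pow]
    linarith [Complex.norm_le_two_mul_norm_ofReal_add hs.le hw]
end
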